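/- Let G be a d-degenerate graph, k a positive integer, and I_s, I_t independent sets of G with |I_s| = |I_t| = k. Then there exists a vertex set W ⊆ V(G) with I_s ∪ I_t ⊆ W and |W| ≤ (2d + 1)·(2d + 1)!·(2k − 1)^{2d + 1} + 2k such that there is a reconfiguration sequence from I_s to I_t in G if and only if there is a reconfiguration sequence from I_s to I_t in the induced subgraph G[W]. -/

import Mathlib

set_option linter.unusedSectionVars false
set_option maxHeartbeats 1000000

/-- A graph `G` is `d`-degenerate if every nonempty induced subgraph (given by a
nonempty finite set of vertices `S`) contains a vertex whose degree within `S`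
is at most `d`. -/
def Degenerate {V : Type*} [Fintype V] [DecidableEq V] (G : SimpleGraph V)
    [DecidableRel G.Adj] (d : ℕ) : Prop :=
  ∀ S : Finset V, S.Nonempty → ∃ v ∈ S, (S.filter (fun u => G.Adj v u)).card ≤ d

/-- `s` is an independent set of `G`. -/
def IsIndep {V : Type*} (G : SimpleGraph V) (s : Finset V) : Prop :=
  ∀ u ∈ s, ∀ w ∈ s, ¬ G.Adj u w

/-- A reconfiguration sequence of independent sets (between `Is` and `It`, with
sizes in `{k-1, k}`, consecutive sets differing in exactly one vertex) inside the
induced subgraph `G[W]`, of length `ℓ`, given by `σ 0, σ 1, …, σ ℓ`. -/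
def IsISRecSeqOn {V : Type*} [DecidableEq V] (G : SimpleGraph V) (W : Finset V)
    (k : ℕ) (Is It : Finset V) (ℓ : ℕ) (σ : ℕ → Finset V) : Prop :=
  σ 0 = Is ∧ σ ℓ = It ∧
  (∀ i ≤ ℓ, σ i ⊆ W ∧ IsIndep G (σ i) ∧ k - 1 ≤ (σ i).card ∧ (σ i).card ≤ k) ∧
  (∀ i < ℓ, (symmDiff (σ i) (σ (i + 1))).card = 1)

open Finset

section Sunflower

variable {α : Type*} [DecidableEq α]

theorem sunflower_exact : ∀ (t s : ℕ) (𝓐 : Finset (Finset α)),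
    (∀ B ∈ 𝓐, B.card = t) → Nat.factorial t * s ^ t < 𝓐.card →
    ∃ 𝓕 ⊆ 𝓐, 𝓕.card = s + 1 ∧ ∃ C : Finset α,
      ∀ B₁ ∈ 𝓕, ∀ B₂ ∈ 𝓕, B₁ ≠ B₂ → B₁ ∩ B₂ = C := by
  intro t
  induction t with
  | zero =>
    intro s 𝓐 hcard hlt
    exfalso
    have : 𝓐 ⊆ {∅} := by
      intro B hB
      simp [Finset.card_eq_zero.mp (hcard B hB)]
    have := Finset.card_le_card this
    simp at this hlt
    omega
  | succ t ih =>
    intro s 𝓐 hcard hlt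
    classical
    by_cases hdisj : ∃ 𝓓 ⊆ 𝓐, 𝓓.card = s + 1 ∧
        (∀ B₁ ∈ 𝓓, ∀ B₂ ∈ 𝓓, B₁ ≠ B₂ → B₁ ∩ B₂ = ∅)
    · obtain ⟨𝓓, h1, h2, h3⟩ := hdisj
      exact ⟨𝓓, h1, h2, ∅, h3⟩
    · -- take a maximum pairwise-disjoint subfamily
      set P := 𝓐.powerset.filter
        (fun 𝓓 => ∀ B₁ ∈ 𝓓, ∀ B₂ ∈ 𝓓, B₁ ≠ B₂ → B₁ ∩ B₂ = ∅) with hP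
      have hPne : P.Nonempty := ⟨∅, by simp [hP]⟩
      obtain ⟨𝓓, h𝓓P, h𝓓max⟩ := P.exists_max_image Finset.card hPne
      have h𝓓A : 𝓓 ⊆ 𝓐 := by
        have := (Finset.mem_filter.mp h𝓓P).1; exact Finset.mem_powerset.mp this
      have h𝓓d : ∀ B₁ ∈ 𝓓, ∀ B₂ ∈ 𝓓, B₁ ≠ B₂ → B₁ ∩ B₂ = ∅ :=
        (Finset.mem_filter.mp h𝓓P).2
      have h𝓓s : 𝓓.card ≤ s := by
        by_contra h
        obtain ⟨𝓓', h𝓓'sub, h𝓓'card⟩ := Finset.exists_subset_card_eq (by omega : s + 1 ≤ 𝓓.card)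
        exact hdisj ⟨𝓓', h𝓓'sub.trans h𝓓A, h𝓓'card,
          fun B₁ h1 B₂ h2 hne => h𝓓d B₁ (h𝓓'sub h1) B₂ (h𝓓'sub h2) hne⟩
      set U := 𝓓.biUnion id with hU
      have hUcard : U.card ≤ (t+1) * s := by
        calc U.card ≤ ∑ B ∈ 𝓓, (id B).card := Finset.card_biUnion_le
        _ ≤ ∑ _B ∈ 𝓓, (t+1) := by
            apply Finset.sum_le_sum
            intro B hB
            simp [hcard B (h𝓓A hB)]
        _ = 𝓓.card * (t+1) := by simp [Finset.sum_const, mul_comm]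
        _ ≤ s * (t+1) := by exact Nat.mul_le_mul_right _ h𝓓s
        _ = (t+1) * s := by ring
      have hmeet : ∀ B ∈ 𝓐, (B ∩ U).Nonempty := by
        intro B hB
        rcases Finset.eq_empty_or_nonempty (B ∩ U) with he | hne
        · exfalso
          -- B is disjoint from U, so B ∉ 𝓓, and 𝓓 ∪ {B} is bigger and disjoint
          have hBne : B.Nonempty := by
            rw [← Finset.card_pos, hcard B hB]; omega
          have hBD : B ∉ 𝓓 := by
            intro hmem
            have : B ⊆ U := fun x hx => Finset.mem_biUnion.mpr ⟨B, hmem, hx⟩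
            obtain ⟨x, hx⟩ := hBne
            have : x ∈ B ∩ U := Finset.mem_inter.mpr ⟨hx, this hx⟩
            simp [he] at this
          have hins : insert B 𝓓 ∈ P := by
            rw [hP, Finset.mem_filter, Finset.mem_powerset]
            constructor
            · exact Finset.insert_subset hB h𝓓A
            · intro B₁ hB₁ B₂ hB₂ hne
              rcases Finset.mem_insert.mp hB₁ with hB₁' | hB₁'
              · subst hB₁'
                rcases Finset.mem_insert.mp hB₂ with hB₂' | hB₂'
                · exact absurd hB₂'.symm hne
                · apply Finset.eq_empty_of_forall_notMem
                  intro x hx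
                  rcases Finset.mem_inter.mp hx with ⟨hx1, hx2⟩
                  have : x ∈ B₁ ∩ U := Finset.mem_inter.mpr
                    ⟨hx1, Finset.mem_biUnion.mpr ⟨B₂, hB₂', hx2⟩⟩
                  simp [he] at this
              · rcases Finset.mem_insert.mp hB₂ with hB₂' | hB₂'
                · subst hB₂'
                  apply Finset.eq_empty_of_forall_notMem
                  intro x hx
                  rcases Finset.mem_inter.mp hx with ⟨hx1, hx2⟩
                  have : x ∈ B₂ ∩ U := Finset.mem_inter.mpr
                    ⟨hx2, Finset.mem_biUnion.mpr ⟨B₁, hB₁', hx1⟩⟩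
                  simp [he] at this
                · exact h𝓓d B₁ hB₁' B₂ hB₂' hne
          have := h𝓓max _ hins
          rw [Finset.card_insert_of_notMem hBD] at this
          omega
        · exact hne
      -- pigeonhole: some e ∈ U is in many members of 𝓐
      have hsum : 𝓐.card ≤ ∑ e ∈ U, (𝓐.filter (fun B => e ∈ B)).card := by
        have h1 : ∀ B ∈ 𝓐, 1 ≤ (U.filter (fun e => e ∈ B)).card := by
          intro B hB
          obtain ⟨x, hx⟩ := hmeet B hB
          rcases Finset.mem_inter.mp hx with ⟨h1, h2⟩
          have : x ∈ U.filter (fun e => e ∈ B) := Finset.mem_filter.mpr ⟨h2, h1⟩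
          exact Finset.card_pos.mpr ⟨x, this⟩
        calc 𝓐.card = ∑ _B ∈ 𝓐, 1 := by simp
        _ ≤ ∑ B ∈ 𝓐, (U.filter (fun e => e ∈ B)).card := Finset.sum_le_sum h1
        _ = ∑ B ∈ 𝓐, ∑ e ∈ U, (if e ∈ B then 1 else 0) := by
            apply Finset.sum_congr rfl
            intro B _
            rw [Finset.card_filter]
        _ = ∑ e ∈ U, ∑ B ∈ 𝓐, (if e ∈ B then 1 else 0) := Finset.sum_comm
        _ = ∑ e ∈ U, (𝓐.filter (fun B => e ∈ B)).card := by
            apply Finset.sum_congr rfl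
            intro e _
            rw [Finset.card_filter]
      have hex : ∃ e ∈ U, Nat.factorial t * s ^ t < (𝓐.filter (fun B => e ∈ B)).card := by
        by_contra hc
        push_neg at hc
        have : ∑ e ∈ U, (𝓐.filter (fun B => e ∈ B)).card ≤
            U.card * (Nat.factorial t * s ^ t) := by
          calc ∑ e ∈ U, (𝓐.filter (fun B => e ∈ B)).card
              ≤ ∑ _e ∈ U, (Nat.factorial t * s ^ t) := Finset.sum_le_sum hc
          _ = U.card * (Nat.factorial t * s ^ t) := by simp [mul_comm]
        have hfac : Nat.factorial (t+1) = (t+1) * Nat.factorial t := rfl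
        have : 𝓐.card ≤ (t+1) * s * (Nat.factorial t * s ^ t) :=
          le_trans hsum (le_trans this (Nat.mul_le_mul_right _ hUcard))
        rw [hfac] at hlt
        have : (t+1) * s * (Nat.factorial t * s^t) = (t+1) * Nat.factorial t * s^(t+1) := by ring
        omega
      obtain ⟨e, heU, he⟩ := hex
      -- recurse on the erased family
      set 𝓑 := (𝓐.filter (fun B => e ∈ B)).image (fun B => B.erase e) with h𝓑
      have hinj : Set.InjOn (fun B : Finset α => B.erase e) ↑(𝓐.filter (fun B => e ∈ B)) := by
        intro B₁ hB₁ B₂ hB₂ hEq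
        simp only [Finset.coe_filter, Set.mem_setOf_eq] at hB₁ hB₂
        have h1 : insert e (B₁.erase e) = B₁ := Finset.insert_erase hB₁.2
        have h2 : insert e (B₂.erase e) = B₂ := Finset.insert_erase hB₂.2
        rw [← h1, ← h2]; simp only at hEq; rw [hEq]
      have h𝓑card : 𝓑.card = (𝓐.filter (fun B => e ∈ B)).card :=
        Finset.card_image_of_injOn hinj
      have h𝓑sizes : ∀ B ∈ 𝓑, B.card = t := by
        intro B hB
        obtain ⟨B₀, hB₀, rfl⟩ := Finset.mem_image.mp hB
        rcases Finset.mem_filter.mp hB₀ with ⟨hB₀A, hB₀e⟩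
        rw [Finset.card_erase_of_mem hB₀e, hcard B₀ hB₀A]
        omega
      obtain ⟨𝓕', h𝓕'B, h𝓕'card, C', hC'⟩ := ih s 𝓑 h𝓑sizes (by omega)
      refine ⟨𝓕'.image (fun B => insert e B), ?_, ?_, insert e C', ?_⟩
      · intro B hB
        obtain ⟨B', hB', rfl⟩ := Finset.mem_image.mp hB
        obtain ⟨B₀, hB₀, rfl⟩ := Finset.mem_image.mp (h𝓕'B hB')
        rcases Finset.mem_filter.mp hB₀ with ⟨hB₀A, hB₀e⟩
        rwa [Finset.insert_erase hB₀e]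
      · rw [Finset.card_image_of_injOn, h𝓕'card]
        intro B₁ hB₁ B₂ hB₂ hEq
        have he₁ : e ∉ B₁ := by
          obtain ⟨B₀, hB₀, h⟩ := Finset.mem_image.mp (h𝓕'B hB₁)
          rw [← h]; exact Finset.notMem_erase e B₀
        have he₂ : e ∉ B₂ := by
          obtain ⟨B₀, hB₀, h⟩ := Finset.mem_image.mp (h𝓕'B hB₂)
          rw [← h]; exact Finset.notMem_erase e B₀
        simp only at hEq
        rw [← Finset.erase_insert he₁, ← Finset.erase_insert he₂, hEq]
      · intro B₁ hB₁ B₂ hB₂ hne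
        obtain ⟨B₁', hB₁', rfl⟩ := Finset.mem_image.mp hB₁
        obtain ⟨B₂', hB₂', rfl⟩ := Finset.mem_image.mp hB₂
        have hne' : B₁' ≠ B₂' := fun h => hne (by rw [h])
        have he₁ : e ∉ B₁' := by
          obtain ⟨B₀, hB₀, h⟩ := Finset.mem_image.mp (h𝓕'B hB₁')
          rw [← h]; exact Finset.notMem_erase e B₀
        have hins : (insert e B₁') ∩ (insert e B₂') = insert e (B₁' ∩ B₂') := by
          ext x; simp only [Finset.mem_inter, Finset.mem_insert]; tauto
        rw [hins, hC' B₁' hB₁' B₂' hB₂' hne']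


theorem sunflower_indexed (t s : ℕ) (hs : 1 ≤ s) (S : Finset α) (f : α → Finset α)
    (hc : ∀ x ∈ S, (f x).card ≤ t)
    (hinj : ∀ x ∈ S, ∀ y ∈ S, f x = f y → x = y)
    (hS : Nat.factorial t * s ^ t < S.card) :
    ∃ F ⊆ S, F.card = s + 1 ∧ ∃ C : Finset α,
      ∀ x ∈ F, ∀ y ∈ F, x ≠ y → f x ∩ f y = C := by
  classical
  set g : α → Finset (ℕ × α) := fun x =>
    (f x).image (fun w => ((0:ℕ), w)) ∪
      (Finset.range (t - (f x).card)).image (fun i => (i+1, x)) with hg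
  have hmem_g : ∀ x (p : ℕ × α), p ∈ g x ↔
      (p.1 = 0 ∧ p.2 ∈ f x) ∨ (∃ i < t - (f x).card, p = (i+1, x)) := by
    intro x p
    rw [hg]
    simp only [Finset.mem_union, Finset.mem_image, Finset.mem_range]
    constructor
    · rintro (⟨w, hw, rfl⟩ | ⟨i, hi, rfl⟩)
      · exact Or.inl ⟨rfl, hw⟩
      · exact Or.inr ⟨i, hi, rfl⟩
    · rintro (⟨h0, h2⟩ | ⟨i, hi, rfl⟩)
      · exact Or.inl ⟨p.2, h2, by rw [← h0]⟩
      · exact Or.inr ⟨i, hi, rfl⟩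
  have hgcard : ∀ x ∈ S, (g x).card = t := by
    intro x hx
    rw [hg]
    rw [Finset.card_union_of_disjoint]
    · rw [Finset.card_image_of_injective _ (fun a b h => by simpa using h),
        Finset.card_image_of_injective _ (fun a b h => by simpa using h),
        Finset.card_range]
      have := hc x hx; omega
    · rw [Finset.disjoint_left]
      rintro p hp hp2
      simp only [Finset.mem_image] at hp hp2
      obtain ⟨w, _, rfl⟩ := hp
      obtain ⟨i, _, h⟩ := hp2
      exact absurd (congrArg Prod.fst h) (by simp)
  have hgf : ∀ x y, g x = g y → f x = f y := by
    intro x y h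
    ext w
    have h1 := hmem_g x ((0:ℕ), w)
    have h2 := hmem_g y ((0:ℕ), w)
    rw [h] at h1
    constructor
    · intro hw
      have : ((0:ℕ), w) ∈ g y := h1.mpr (by left; exact ⟨rfl, hw⟩)
      rcases (h2.mp this) with ⟨_, hh⟩ | ⟨i, _, hh⟩
      · exact hh
      · exact absurd (congrArg Prod.fst hh) (by simp)
    · intro hw
      have : ((0:ℕ), w) ∈ g y := h2.mpr (by left; exact ⟨rfl, hw⟩)
      rcases (h1.mp this) with ⟨_, hh⟩ | ⟨i, _, hh⟩
      · exact hh
      · exact absurd (congrArg Prod.fst hh) (by simp)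
  have hginj : Set.InjOn g ↑S := fun x hx y hy h =>
    hinj x (by simpa using hx) y (by simpa using hy) (hgf x y h)
  set 𝓐 := S.image g with h𝓐
  have h𝓐card : 𝓐.card = S.card := Finset.card_image_of_injOn hginj
  obtain ⟨𝓕, h𝓕𝓐, h𝓕card, C', hC'⟩ := sunflower_exact t s 𝓐
    (by rintro B hB; obtain ⟨x, hx, rfl⟩ := Finset.mem_image.mp hB; exact hgcard x hx)
    (by omega)
  set F := S.filter (fun x => g x ∈ 𝓕) with hF
  have hFS : F ⊆ S := Finset.filter_subset _ _
  have himgF : F.image g = 𝓕 := by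
    apply Finset.Subset.antisymm
    · intro B hB
      obtain ⟨x, hx, rfl⟩ := Finset.mem_image.mp hB
      exact (Finset.mem_filter.mp hx).2
    · intro B hB
      obtain ⟨x, hx, rfl⟩ := Finset.mem_image.mp (h𝓕𝓐 hB)
      exact Finset.mem_image.mpr ⟨x, Finset.mem_filter.mpr ⟨hx, hB⟩, rfl⟩
  have hFcard : F.card = s + 1 := by
    rw [← h𝓕card, ← himgF]
    exact (Finset.card_image_of_injOn (Set.InjOn.mono (by intro x hx; simpa using hFS (by simpa using hx)) hginj)).symm
  -- key: for distinct x y ∈ F, g x ∩ g y is the image of f x ∩ f y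
  have hkey : ∀ x ∈ F, ∀ y ∈ F, x ≠ y →
      g x ∩ g y = (f x ∩ f y).image (fun w => ((0:ℕ), w)) := by
    intro x hx y hy hxy
    ext p
    simp only [Finset.mem_inter, Finset.mem_image]
    constructor
    · rintro ⟨hpx, hpy⟩
      rcases (hmem_g x p).mp hpx with ⟨h0, hfx⟩ | ⟨i, hi, rfl⟩
      · rcases (hmem_g y p).mp hpy with ⟨_, hfy⟩ | ⟨j, _, hj⟩
        · exact ⟨p.2, ⟨hfx, hfy⟩, by rw [← h0]⟩
        · exfalso; rw [hj] at h0; simp at h0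
      · rcases (hmem_g y (i+1, x)).mp hpy with ⟨h0, _⟩ | ⟨j, _, hj⟩
        · exact absurd h0 (Nat.succ_ne_zero i)
        · exfalso; exact hxy (congrArg Prod.snd hj)
    · rintro ⟨w, ⟨h1, h2⟩, rfl⟩
      exact ⟨(hmem_g x _).mpr (Or.inl ⟨rfl, h1⟩), (hmem_g y _).mpr (Or.inl ⟨rfl, h2⟩)⟩
  have hFtwo : ∃ x₀ ∈ F, ∃ x₁ ∈ F, x₀ ≠ x₁ := by
    have : 1 < F.card := by omega
    exact Finset.one_lt_card.mp this
  obtain ⟨x₀, hx₀, x₁, hx₁, hne01⟩ := hFtwo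
  refine ⟨F, hFS, hFcard, f x₀ ∩ f x₁, ?_⟩
  have haux : ∀ x ∈ F, ∀ y ∈ F, x ≠ y →
      (f x ∩ f y).image (fun w => ((0:ℕ), w)) = C' := by
    intro x hx y hy hxy
    rw [← hkey x hx y hy hxy]
    apply hC' (g x) (by rw [← himgF]; exact Finset.mem_image_of_mem g hx)
      (g y) (by rw [← himgF]; exact Finset.mem_image_of_mem g hy)
    intro h
    exact hxy (hginj (by simpa using hFS hx) (by simpa using hFS hy) h)
  intro x hx y hy hxy
  have h1 := haux x hx y hy hxy
  have h2 := haux x₀ hx₀ x₁ hx₁ hne01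
  rw [← h2] at h1
  have : Function.Injective (fun w : α => ((0:ℕ), w)) := fun a b h => by simpa using h
  exact Finset.image_injective this h1

end Sunflower

section Basics

variable {V : Type*} [DecidableEq V] (G : SimpleGraph V) (k : ℕ)

lemma symmDiff_erase_self {S : Finset V} {x : V} (hx : x ∈ S) :
    symmDiff S (S.erase x) = {x} := by
  ext w
  simp only [Finset.mem_symmDiff, Finset.mem_erase, Finset.mem_singleton]
  constructor
  · rintro (⟨hw, h2⟩ | ⟨⟨hne, hw⟩, h2⟩)
    · by_contra hne; exact h2 ⟨hne, hw⟩
    · exact absurd hw h2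
  · rintro rfl; exact Or.inl ⟨hx, fun h => h.1 rfl⟩

lemma symmDiff_insert_self {S : Finset V} {u : V} (hu : u ∉ S) :
    symmDiff S (insert u S) = {u} := by
  ext w
  simp only [Finset.mem_symmDiff, Finset.mem_insert, Finset.mem_singleton]
  constructor
  · rintro (⟨hw, h2⟩ | ⟨(rfl | hw), h2⟩)
    · exact absurd (Or.inr hw) h2
    · rfl
    · exact absurd hw h2
  · rintro rfl; exact Or.inr ⟨Or.inl rfl, hu⟩

lemma symmDiff_card_one_decode {S T : Finset V} (h : (symmDiff S T).card = 1) :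
    ∃ a, (a ∈ S ∧ T = S.erase a) ∨ (a ∉ S ∧ T = insert a S) := by
  obtain ⟨a, ha⟩ := Finset.card_eq_one.mp h
  have hmem : ∀ w, w ∈ symmDiff S T ↔ w = a := by
    intro w; rw [ha]; simp
  have hao : (a ∈ S ∧ a ∉ T) ∨ (a ∈ T ∧ a ∉ S) := by
    have := (hmem a).mpr rfl
    rw [Finset.mem_symmDiff] at this
    tauto
  have hother : ∀ w, w ≠ a → (w ∈ S ↔ w ∈ T) := by
    intro w hw
    have := (hmem w)
    rw [Finset.mem_symmDiff] at this
    constructor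
    · intro hS; by_contra hT; exact hw (this.mp (Or.inl ⟨hS, hT⟩))
    · intro hT; by_contra hS; exact hw (this.mp (Or.inr ⟨hT, hS⟩))
  rcases hao with ⟨h1, h2⟩ | ⟨h1, h2⟩
  · refine ⟨a, Or.inl ⟨h1, ?_⟩⟩
    ext w
    simp only [Finset.mem_erase]
    constructor
    · intro hw
      have hne : w ≠ a := fun hh => h2 (hh ▸ hw)
      exact ⟨hne, (hother w hne).mpr hw⟩
    · rintro ⟨hne, hw⟩; exact (hother w hne).mp hw
  · refine ⟨a, Or.inr ⟨h2, ?_⟩⟩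
    ext w
    simp only [Finset.mem_insert]
    constructor
    · intro hw
      by_cases hne : w = a
      · exact Or.inl hne
      · exact Or.inr ((hother w hne).mpr hw)
    · rintro (rfl | hw)
      · exact h1
      · exact (hother w (fun hh => h2 (hh ▸ hw))).mp hw


def Reach (W I J : Finset V) : Prop := ∃ ℓ σ, IsISRecSeqOn G W k I J ℓ σ

variable {G k}

lemma indep_mono {S T : Finset V} (h : IsIndep G S) (hts : T ⊆ S) : IsIndep G T :=
  fun u hu w hw => h u (hts hu) w (hts hw)

lemma indep_insert {S : Finset V} {u : V} (hS : IsIndep G S)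
    (h : ∀ w ∈ S, ¬ G.Adj u w) : IsIndep G (insert u S) := by
  intro a ha b hb hadj
  rcases Finset.mem_insert.mp ha with ha' | ha'
  · subst ha'
    rcases Finset.mem_insert.mp hb with hb' | hb'
    · subst hb'; exact G.loopless.irrefl _ hadj
    · exact h b hb' hadj
  · rcases Finset.mem_insert.mp hb with hb' | hb'
    · subst hb'; exact h a ha' hadj.symm
    · exact hS a ha' b hb' hadj

lemma reach_mono {W W' I J : Finset V} (h : W ⊆ W') (hr : Reach G k W I J) :
    Reach G k W' I J := by
  obtain ⟨ℓ, σ, h0, hl, hg, hs⟩ := hr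
  exact ⟨ℓ, σ, h0, hl, fun i hi => ⟨(hg i hi).1.trans h, (hg i hi).2⟩, hs⟩

lemma reach_refl {W I : Finset V} (h : I ⊆ W) (hi : IsIndep G I)
    (hc : k - 1 ≤ I.card) (hc2 : I.card ≤ k) : Reach G k W I I :=
  ⟨0, fun _ => I, rfl, rfl, fun i _ => ⟨h, hi, hc, hc2⟩, fun i hi => by omega⟩

lemma reach_trans {W I J K : Finset V} (h1 : Reach G k W I J) (h2 : Reach G k W J K) :
    Reach G k W I K := by
  obtain ⟨ℓ₁, σ₁, h10, h1l, h1g, h1s⟩ := h1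
  obtain ⟨ℓ₂, σ₂, h20, h2l, h2g, h2s⟩ := h2
  refine ⟨ℓ₁ + ℓ₂, fun i => if i < ℓ₁ then σ₁ i else σ₂ (i - ℓ₁), ?_, ?_, ?_, ?_⟩
  · by_cases h : 0 < ℓ₁
    · simpa [h] using h10
    · have hz : ℓ₁ = 0 := by omega
      have : I = J := by subst hz; rw [← h10, h1l]
      simp [hz, h20, ← this]
  · have : ¬ (ℓ₁ + ℓ₂ < ℓ₁) := by omega
    simp [this, h2l]
  · intro i hi
    by_cases h : i < ℓ₁
    · simpa [h] using h1g i (le_of_lt h)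
    · simp only [h, if_false]
      exact h2g (i - ℓ₁) (by omega)
  · intro i hi
    by_cases h : i < ℓ₁
    · by_cases h' : i + 1 < ℓ₁
      · simpa [h, h'] using h1s i h
      · have hi1 : i + 1 = ℓ₁ := by omega
        have : σ₂ (i + 1 - ℓ₁) = σ₁ (i+1) := by
          rw [hi1]; simp [h20, ← h1l, hi1]
        simp only [h, if_true, h', if_false, this]
        exact h1s i h
    · have h' : ¬ (i + 1 < ℓ₁) := by omega
      simp only [h, h', if_false]
      have : i + 1 - ℓ₁ = (i - ℓ₁) + 1 := by omega
      rw [this]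
      exact h2s (i - ℓ₁) (by omega)

lemma reach_symm {W I J : Finset V} (h : Reach G k W I J) : Reach G k W J I := by
  obtain ⟨ℓ, σ, h0, hl, hg, hs⟩ := h
  refine ⟨ℓ, fun i => σ (ℓ - i), by simp [hl], by simp [h0], fun i hi => hg _ (by omega), ?_⟩
  intro i hi
  have h1 : ℓ - i = (ℓ - (i+1)) + 1 := by omega
  simp only []
  rw [symmDiff_comm, h1]
  exact hs (ℓ - (i+1)) (by omega)

lemma reach_single {W S T : Finset V} (hS : S ⊆ W) (hSi : IsIndep G S)
    (hSc1 : k - 1 ≤ S.card) (hSc2 : S.card ≤ k)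
    (hT : T ⊆ W) (hTi : IsIndep G T) (hTc1 : k - 1 ≤ T.card) (hTc2 : T.card ≤ k)
    (hΔ : (symmDiff S T).card = 1) : Reach G k W S T := by
  refine ⟨1, fun i => if i = 0 then S else T, by simp, by simp, ?_, ?_⟩
  · intro i hi
    interval_cases i
    · simp only [if_true, reduceIte]; exact ⟨hS, hSi, hSc1, hSc2⟩
    · simp only [Nat.one_ne_zero, reduceIte, if_false]; exact ⟨hT, hTi, hTc1, hTc2⟩
  · intro i hi
    interval_cases i
    simpa using hΔ

lemma erase_insert_of_ne' {a b : V} {s : Finset V} (h : a ≠ b) :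
    (insert a s).erase b = insert a (s.erase b) := by
  ext w
  simp only [Finset.mem_erase, Finset.mem_insert]
  constructor
  · rintro ⟨h1, (rfl | h2)⟩
    · exact Or.inl rfl
    · exact Or.inr ⟨h1, h2⟩
  · rintro (rfl | ⟨h1, h2⟩)
    · exact ⟨h, Or.inl rfl⟩
    · exact ⟨h1, Or.inr h2⟩

lemma erase_comm' {a b : V} (s : Finset V) :
    (s.erase a).erase b = (s.erase b).erase a := by
  ext w
  simp only [Finset.mem_erase]
  tauto

def cnbhd (G : SimpleGraph V) [DecidableRel G.Adj] (W : Finset V) (x : V) : Finset V :=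
  insert x (W.filter (fun u => G.Adj x u))

variable [DecidableRel G.Adj]

lemma mem_cnbhd {W : Finset V} {x w : V} :
    w ∈ cnbhd G W x ↔ w = x ∨ (w ∈ W ∧ G.Adj x w) := by
  unfold cnbhd
  simp only [Finset.mem_insert, Finset.mem_filter]

lemma self_mem_cnbhd {W : Finset V} {x : V} : x ∈ cnbhd G W x :=
  mem_cnbhd.mpr (Or.inl rfl)

lemma not_mem_cnbhd_of {W : Finset V} {x w : V} (hw : w ∈ W)
    (h : w ∉ cnbhd G W x) : w ≠ x ∧ ¬ G.Adj x w := by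
  constructor
  · intro hh; exact h (mem_cnbhd.mpr (Or.inl hh))
  · intro hh; exact h (mem_cnbhd.mpr (Or.inr ⟨hw, hh⟩))

/-- A single TAR move inside `W`. -/
lemma reach_single' {W S T : Finset V} (hS : S ⊆ W) (hSi : IsIndep G S)
    (hSc1 : k - 1 ≤ S.card) (hSc2 : S.card ≤ k)
    (hT : T ⊆ W) (hTi : IsIndep G T) (hTc1 : k - 1 ≤ T.card) (hTc2 : T.card ≤ k)
    (hΔ : (symmDiff S T).card = 1) : Reach G k W S T :=
  reach_single hS hSi hSc1 hSc2 hT hTi hTc1 hTc2 hΔ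

/-- The main simulation lemma: a vertex `v` which is the center of a suitable
"sunflower-like" family `F` with kernel `C` can be removed from `W`. -/
lemma reach_erase_of_flower (hk : 1 ≤ k)
    {W : Finset V} {v : V} {C F : Finset V}
    (hFW : F ⊆ W) (hvF : v ∈ F)
    (hCv : C ⊆ cnbhd G W v)
    (hchoose : ∀ R : Finset V, R ⊆ W → R.card ≤ k → (∀ w ∈ R, w ∉ C) →
      ∃ r ∈ F, r ≠ v ∧ ∀ w ∈ R, w ∉ cnbhd G W r)
    {Is It : Finset V} (hvIs : v ∉ Is) (hvIt : v ∉ It)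
    (hIsc : Is.card = k) (hItc : It.card = k)
    (h : Reach G k W Is It) : Reach G k (W.erase v) Is It := by
  obtain ⟨ℓ, σ, h0, hl, hg, hs⟩ := h
  -- parity of cardinalities
  have hpar : ∀ i ≤ ℓ, (i % 2 = 0 → (σ i).card = k) ∧ (i % 2 = 1 → (σ i).card = k - 1) := by
    intro i
    induction i with
    | zero => intro _; exact ⟨fun _ => by rw [h0]; exact hIsc, fun h => by omega⟩
    | succ n ihn =>
      intro hn
      have hn' : n ≤ ℓ := by omega
      have ihn' := ihn hn'
      have hbounds := hg (n+1) hn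
      have hbounds' := hg n hn'
      obtain ⟨a, hdec⟩ := symmDiff_card_one_decode (hs n (by omega))
      rcases hdec with ⟨haS, hT⟩ | ⟨haS, hT⟩
      · have : (σ (n+1)).card = (σ n).card - 1 := by
          rw [hT, Finset.card_erase_of_mem haS]
        have hca : 1 ≤ (σ n).card := Finset.card_pos.mpr ⟨a, haS⟩
        constructor <;> intro hmod <;> omega
      · have : (σ (n+1)).card = (σ n).card + 1 := by
          rw [hT, Finset.card_insert_of_notMem haS]
        constructor <;> intro hmod <;> omega
  have hleven : ℓ % 2 = 0 := by
    by_contra hodd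
    have := (hpar ℓ le_rfl).2 (by omega)
    rw [hl, hItc] at this
    omega
  -- the notion of a simulated state
  have key : ∀ j, 2*j ≤ ℓ → ∃ S', Reach G k (W.erase v) Is S' ∧ S' ⊆ W.erase v ∧
      IsIndep G S' ∧ S'.card = k ∧
      ((v ∉ σ (2*j) ∧ S' = σ (2*j)) ∨
       (v ∈ σ (2*j) ∧ ∃ r, r ∈ F ∧ r ≠ v ∧ r ∉ (σ (2*j)).erase v ∧
         (∀ w ∈ (σ (2*j)).erase v, ¬ G.Adj r w) ∧ S' = insert r ((σ (2*j)).erase v))) := by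
    intro j
    induction j with
    | zero =>
      intro _
      have hIsW : Is ⊆ W.erase v := by
        intro w hw
        exact Finset.mem_erase.mpr ⟨fun hh => hvIs (hh ▸ hw), (hg 0 (by omega)).1 (h0 ▸ hw)⟩
      have hIsi : IsIndep G Is := h0 ▸ (hg 0 (by omega)).2.1
      exact ⟨Is, reach_refl hIsW hIsi (by omega) (by omega),
        hIsW, hIsi, hIsc, Or.inl ⟨fun hh => hvIs (h0 ▸ hh), h0.symm⟩⟩
    | succ j ihj =>
      intro hj2
      have h2j : 2*j ≤ ℓ := by omega
      have h2j1 : 2*j+1 ≤ ℓ := by omega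
      have h2j2 : 2*j+2 ≤ ℓ := by omega
      have hidx : 2*(j+1) = 2*j+2 := by ring
      rw [hidx]
      obtain ⟨S', hreach, hS'W, hS'i, hS'c, hmatch⟩ := ihj h2j
      -- cards
      have hc0 : (σ (2*j)).card = k := (hpar _ h2j).1 (by omega)
      have hc1 : (σ (2*j+1)).card = k - 1 := (hpar _ h2j1).2 (by omega)
      have hc2 : (σ (2*j+2)).card = k := (hpar _ h2j2).1 (by omega)
      -- goods
      have hg0 := hg (2*j) h2j
      have hg1 := hg (2*j+1) h2j1
      have hg2 := hg (2*j+2) h2j2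
      -- decode the two moves
      have hdx := symmDiff_card_one_decode (hs (2*j) (by omega))
      have hdu := symmDiff_card_one_decode (hs (2*j+1) (by omega))
      obtain ⟨x, hdx⟩ := hdx
      obtain ⟨u, hdu⟩ := hdu
      have hxdec : x ∈ σ (2*j) ∧ σ (2*j+1) = (σ (2*j)).erase x := by
        rcases hdx with ⟨h1, h2⟩ | ⟨h1, h2⟩
        · exact ⟨h1, h2⟩
        · exfalso
          have : (σ (2*j+1)).card = (σ (2*j)).card + 1 := by
            rw [h2, Finset.card_insert_of_notMem h1]
          omega
      have hudec : u ∉ σ (2*j+1) ∧ σ (2*j+2) = insert u (σ (2*j+1)) := by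
        rcases hdu with ⟨h1, h2⟩ | ⟨h1, h2⟩
        · exfalso
          have hca : 1 ≤ (σ (2*j+1)).card := Finset.card_pos.mpr ⟨u, h1⟩
          have : (σ (2*j+2)).card = (σ (2*j+1)).card - 1 := by
            rw [h2, Finset.card_erase_of_mem h1]
          omega
        · exact ⟨h1, h2⟩
      obtain ⟨hxmem, hT1⟩ := hxdec
      obtain ⟨humem, hT2⟩ := hudec
      -- abbreviations
      have hT0W : σ (2*j) ⊆ W := hg0.1
      have hT0i : IsIndep G (σ (2*j)) := hg0.2.1
      have hT1W : σ (2*j+1) ⊆ W := hg1.1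
      have hT1i : IsIndep G (σ (2*j+1)) := hg1.2.1
      have hT2W : σ (2*j+2) ⊆ W := hg2.1
      have hT2i : IsIndep G (σ (2*j+2)) := hg2.2.1
      by_cases hvT0 : v ∈ σ (2*j)
      · -- v is in the current real set; S' = insert r ((σ (2*j)).erase v)
        rcases hmatch with ⟨hnv, _⟩ | ⟨_, r, hrF, hrv, hrT0e, hradj, hS'eq⟩
        · exact absurd hvT0 hnv
        have hrW : r ∈ W := hFW hrF
        have hR2W : (σ (2*j)).erase v ⊆ W := (Finset.erase_subset _ _).trans hT0W
        have hR2sub : (σ (2*j)).erase v ⊆ W.erase v := Finset.erase_subset_erase _ hT0W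
        have hR2c : ((σ (2*j)).erase v).card = k - 1 := by
          rw [Finset.card_erase_of_mem hvT0, hc0]
        have hR2i : IsIndep G ((σ (2*j)).erase v) :=
          indep_mono hT0i (Finset.erase_subset _ _)
        by_cases hxv : x = v
        · subst hxv
          by_cases huv : u = x
          · -- x = v is removed and immediately re-added
            have hT2T0 : σ (2*j+2) = σ (2*j) := by
              rw [hT2, hT1, huv, Finset.insert_erase hvT0]
            exact ⟨S', hreach, hS'W, hS'i, hS'c, Or.inr ⟨by rw [hT2T0]; exact hvT0,
              r, hrF, hrv, by rw [hT2T0]; exact hrT0e, by rw [hT2T0]; exact hradj,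
              by rw [hT2T0]; exact hS'eq⟩⟩
          · -- case 3 : v leaves for good (during this block)
            have hvT1 : x ∉ σ (2*j+1) := by rw [hT1]; exact Finset.notMem_erase _ _
            have hvT2 : x ∉ σ (2*j+2) := by
              rw [hT2]
              intro hh
              rcases Finset.mem_insert.mp hh with hh | hh
              · exact huv hh.symm
              · exact hvT1 hh
            have hT1sub : σ (2*j+1) ⊆ W.erase x := by
              intro w hw
              exact Finset.mem_erase.mpr ⟨fun hh => hvT1 (hh ▸ hw), hT1W hw⟩
            have hT2sub : σ (2*j+2) ⊆ W.erase x := by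
              intro w hw
              exact Finset.mem_erase.mpr ⟨fun hh => hvT2 (hh ▸ hw), hT2W hw⟩
            have hS'eq' : S' = insert r (σ (2*j+1)) := by rw [hS'eq, ← hT1]
            have hrT1 : r ∉ σ (2*j+1) := by rw [hT1]; exact hrT0e
            have move1 : Reach G k (W.erase x) S' (σ (2*j+1)) := by
              apply reach_single' hS'W hS'i (by omega) (by omega) hT1sub hT1i
                (by omega) (by omega)
              rw [hS'eq', symmDiff_comm, symmDiff_insert_self hrT1]
              simp
            have move2 : Reach G k (W.erase x) (σ (2*j+1)) (σ (2*j+2)) := by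
              apply reach_single' hT1sub hT1i (by omega) (by omega) hT2sub hT2i
                (by omega) (by omega)
              rw [hT2, symmDiff_insert_self humem]
              simp
            exact ⟨σ (2*j+2), reach_trans (reach_trans hreach move1) move2,
              hT2sub, hT2i, hc2, Or.inl ⟨hvT2, rfl⟩⟩
        · -- case 4 : v stays, some other token moves from x to u
          have hvT1 : v ∈ σ (2*j+1) := by
            rw [hT1]; exact Finset.mem_erase.mpr ⟨fun hh => hxv hh.symm, hvT0⟩
          have hvT2 : v ∈ σ (2*j+2) := by rw [hT2]; exact Finset.mem_insert_of_mem hvT1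
          have huvne : u ≠ v := fun hh => humem (hh ▸ hvT1)
          have huT2 : u ∈ σ (2*j+2) := by rw [hT2]; exact Finset.mem_insert_self _ _
          have huW : u ∈ W := hT2W huT2
          have huC : u ∉ C := by
            intro hC
            rcases mem_cnbhd.mp (hCv hC) with hh | ⟨_, hh⟩
            · exact huvne hh
            · exact hT2i v hvT2 u huT2 hh
          have hxR2 : x ∈ (σ (2*j)).erase v := Finset.mem_erase.mpr ⟨hxv, hxmem⟩
          have hxr : x ≠ r := fun hh => hrT0e (hh ▸ hxR2)
          have hR2C : ∀ w ∈ (σ (2*j)).erase v, w ∉ C := by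
            intro w hw hC
            have hwv : w ≠ v := (Finset.mem_erase.mp hw).1
            have hwT0 : w ∈ σ (2*j) := Finset.mem_of_mem_erase hw
            rcases mem_cnbhd.mp (hCv hC) with hh | ⟨_, hh⟩
            · exact hwv hh
            · exact hT0i v hvT0 w hwT0 hh
          have herase2 : (σ (2*j+2)).erase v = insert u (((σ (2*j)).erase v).erase x) := by
            rw [hT2, hT1, erase_insert_of_ne' huvne, erase_comm' (σ (2*j))]
          have huR2x : u ∉ ((σ (2*j)).erase v).erase x := by
            intro hh
            have h1 : u ≠ x := (Finset.mem_erase.mp hh).1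
            have h2 : u ∈ σ (2*j) := Finset.mem_of_mem_erase (Finset.mem_of_mem_erase hh)
            exact humem (by rw [hT1]; exact Finset.mem_erase.mpr ⟨h1, h2⟩)
          have hR2xsub : ((σ (2*j)).erase v).erase x ⊆ (σ (2*j)).erase v :=
            Finset.erase_subset _ _
          have hR2xT1 : ((σ (2*j)).erase v).erase x ⊆ σ (2*j+1) := by
            rw [hT1, erase_comm' (σ (2*j))]
            exact Finset.erase_subset _ _
          have hcardsR2 : 1 ≤ ((σ (2*j)).erase v).card := Finset.card_pos.mpr ⟨x, hxR2⟩
          have hR2xc : (((σ (2*j)).erase v).erase x).card = ((σ (2*j)).erase v).card - 1 :=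
            Finset.card_erase_of_mem hxR2
          by_cases hur : u ∈ cnbhd G W r
          · -- case 4b : the replacement r conflicts with u; switch replacements first
            obtain ⟨r', hr'F, hr'v, hr'good⟩ := hchoose (insert u ((σ (2*j)).erase v))
              (Finset.insert_subset huW hR2W)
              (by
                have := Finset.card_insert_le u ((σ (2*j)).erase v)
                omega)
              (by
                intro w hw
                rcases Finset.mem_insert.mp hw with rfl | hw
                · exact huC
                · exact hR2C w hw)
            have hr'W : r' ∈ W := hFW hr'F
            have hr'R2 : r' ∉ (σ (2*j)).erase v := fun hh =>
              (hr'good r' (Finset.mem_insert_of_mem hh)) self_mem_cnbhd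
            have hr'u : r' ≠ u := by
              intro hh
              exact (hr'good u (Finset.mem_insert_self _ _)) (hh ▸ self_mem_cnbhd)
            have hr'adj : ∀ w ∈ insert u ((σ (2*j)).erase v), ¬ G.Adj r' w := by
              intro w hw
              have hwW : w ∈ W := by
                rcases Finset.mem_insert.mp hw with rfl | hw'
                · exact huW
                · exact hR2W hw'
              exact (not_mem_cnbhd_of hwW (hr'good w hw)).2
            have hrR2e : r ∉ (σ (2*j)).erase v := hrT0e
            have move1 : Reach G k (W.erase v) S' ((σ (2*j)).erase v) := by
              apply reach_single' hS'W hS'i (by omega) (by omega) hR2sub hR2i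
                (by omega) (by omega)
              rw [hS'eq, symmDiff_comm, symmDiff_insert_self hrR2e]
              simp
            have hM1i : IsIndep G (insert r' ((σ (2*j)).erase v)) :=
              indep_insert hR2i (fun w hw => hr'adj w (Finset.mem_insert_of_mem hw))
            have hM1sub : insert r' ((σ (2*j)).erase v) ⊆ W.erase v :=
              Finset.insert_subset (Finset.mem_erase.mpr ⟨hr'v, hr'W⟩) hR2sub
            have hM1c : (insert r' ((σ (2*j)).erase v)).card = k := by
              rw [Finset.card_insert_of_notMem hr'R2, hR2c]
              omega
            have move2 : Reach G k (W.erase v) ((σ (2*j)).erase v)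
                (insert r' ((σ (2*j)).erase v)) := by
              apply reach_single' hR2sub hR2i (by omega) (by omega) hM1sub hM1i
                (by omega) (by omega)
              rw [symmDiff_insert_self hr'R2]
              simp
            have hxM1 : x ∈ insert r' ((σ (2*j)).erase v) := Finset.mem_insert_of_mem hxR2
            have hxr' : x ≠ r' := fun hh => hr'R2 (hh ▸ hxR2)
            have heq3 : (insert r' ((σ (2*j)).erase v)).erase x =
                insert r' (((σ (2*j)).erase v).erase x) := erase_insert_of_ne' hxr'.symm
            have hr'R2x : r' ∉ ((σ (2*j)).erase v).erase x :=
              fun hh => hr'R2 (Finset.mem_of_mem_erase hh)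
            have hM2i : IsIndep G (insert r' (((σ (2*j)).erase v).erase x)) :=
              indep_insert (indep_mono hR2i (Finset.erase_subset _ _))
                (fun w hw => hr'adj w (Finset.mem_insert_of_mem (hR2xsub hw)))
            have hM2sub : insert r' (((σ (2*j)).erase v).erase x) ⊆ W.erase v :=
              Finset.insert_subset (Finset.mem_erase.mpr ⟨hr'v, hr'W⟩)
                (hR2xsub.trans hR2sub)
            have hM2c : (insert r' (((σ (2*j)).erase v).erase x)).card = k - 1 := by
              rw [Finset.card_insert_of_notMem hr'R2x, hR2xc, hR2c]
              omega
            have move3 : Reach G k (W.erase v) (insert r' ((σ (2*j)).erase v))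
                (insert r' (((σ (2*j)).erase v).erase x)) := by
              apply reach_single' hM1sub hM1i (by omega) (by omega) hM2sub hM2i
                (by omega) (by omega)
              rw [← heq3, symmDiff_erase_self hxM1]
              simp
            have huM2 : u ∉ insert r' (((σ (2*j)).erase v).erase x) := by
              intro hh
              rcases Finset.mem_insert.mp hh with hh | hh
              · exact hr'u hh.symm
              · exact huR2x hh
            have hS''i : IsIndep G (insert u (insert r' (((σ (2*j)).erase v).erase x))) := by
              apply indep_insert hM2i
              intro w hw
              rcases Finset.mem_insert.mp hw with rfl | hw
              · intro hh; exact (hr'adj u (Finset.mem_insert_self _ _)) hh.symm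
              · exact fun hh => hT2i u huT2 w (by
                  rw [hT2]; exact Finset.mem_insert_of_mem (hR2xT1 hw)) hh
            have hS''sub : insert u (insert r' (((σ (2*j)).erase v).erase x)) ⊆ W.erase v :=
              Finset.insert_subset (Finset.mem_erase.mpr ⟨huvne, huW⟩) hM2sub
            have hS''c : (insert u (insert r' (((σ (2*j)).erase v).erase x))).card = k := by
              rw [Finset.card_insert_of_notMem huM2, hM2c]
              omega
            have move4 : Reach G k (W.erase v) (insert r' (((σ (2*j)).erase v).erase x))
                (insert u (insert r' (((σ (2*j)).erase v).erase x))) := by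
              apply reach_single' hM2sub hM2i (by omega) (by omega) hS''sub hS''i
                (by omega) (by omega)
              rw [symmDiff_insert_self huM2]
              simp
            have hfinaleq : insert u (insert r' (((σ (2*j)).erase v).erase x)) =
                insert r' ((σ (2*j+2)).erase v) := by
              rw [herase2, Finset.insert_comm]
            refine ⟨insert u (insert r' (((σ (2*j)).erase v).erase x)),
              reach_trans (reach_trans (reach_trans (reach_trans hreach move1) move2)
                move3) move4,
              hS''sub, hS''i, hS''c, Or.inr ⟨hvT2, r', hr'F, hr'v, ?_, ?_, hfinaleq⟩⟩
            · rw [herase2]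
              intro hh
              rcases Finset.mem_insert.mp hh with hh | hh
              · exact hr'u hh
              · exact hr'R2x hh
            · rw [herase2]
              intro w hw
              rcases Finset.mem_insert.mp hw with rfl | hw
              · exact hr'adj w (Finset.mem_insert_self _ _)
              · exact hr'adj w (Finset.mem_insert_of_mem (hR2xsub hw))
          · -- case 4a : no conflict, mirror the move
            have hurne : u ≠ r ∧ ¬ G.Adj r u := not_mem_cnbhd_of huW hur
            have hrR2x : r ∉ ((σ (2*j)).erase v).erase x :=
              fun hh => hrT0e (Finset.mem_of_mem_erase hh)
            have hxS' : x ∈ S' := by rw [hS'eq]; exact Finset.mem_insert_of_mem hxR2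
            have heq4 : S'.erase x = insert r (((σ (2*j)).erase v).erase x) := by
              rw [hS'eq, erase_insert_of_ne' hxr.symm]
            have hM2i : IsIndep G (insert r (((σ (2*j)).erase v).erase x)) :=
              indep_insert (indep_mono hR2i (Finset.erase_subset _ _))
                (fun w hw => hradj w (hR2xsub hw))
            have hM2sub : insert r (((σ (2*j)).erase v).erase x) ⊆ W.erase v :=
              Finset.insert_subset (Finset.mem_erase.mpr ⟨hrv, hrW⟩)
                (hR2xsub.trans hR2sub)
            have hM2c : (insert r (((σ (2*j)).erase v).erase x)).card = k - 1 := by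
              rw [Finset.card_insert_of_notMem hrR2x, hR2xc, hR2c]
              omega
            have move1 : Reach G k (W.erase v) S'
                (insert r (((σ (2*j)).erase v).erase x)) := by
              apply reach_single' hS'W hS'i (by omega) (by omega) hM2sub hM2i
                (by omega) (by omega)
              rw [← heq4, symmDiff_erase_self hxS']
              simp
            have huM2 : u ∉ insert r (((σ (2*j)).erase v).erase x) := by
              intro hh
              rcases Finset.mem_insert.mp hh with hh | hh
              · exact hurne.1 hh
              · exact huR2x hh
            have hS''i : IsIndep G (insert u (insert r (((σ (2*j)).erase v).erase x))) := by
              apply indep_insert hM2i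
              intro w hw
              rcases Finset.mem_insert.mp hw with rfl | hw
              · intro hh; exact hurne.2 hh.symm
              · exact fun hh => hT2i u huT2 w (by
                  rw [hT2]; exact Finset.mem_insert_of_mem (hR2xT1 hw)) hh
            have hS''sub : insert u (insert r (((σ (2*j)).erase v).erase x)) ⊆ W.erase v :=
              Finset.insert_subset (Finset.mem_erase.mpr ⟨huvne, huW⟩) hM2sub
            have hS''c : (insert u (insert r (((σ (2*j)).erase v).erase x))).card = k := by
              rw [Finset.card_insert_of_notMem huM2, hM2c]
              omega
            have move2 : Reach G k (W.erase v) (insert r (((σ (2*j)).erase v).erase x))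
                (insert u (insert r (((σ (2*j)).erase v).erase x))) := by
              apply reach_single' hM2sub hM2i (by omega) (by omega) hS''sub hS''i
                (by omega) (by omega)
              rw [symmDiff_insert_self huM2]
              simp
            have hfinaleq : insert u (insert r (((σ (2*j)).erase v).erase x)) =
                insert r ((σ (2*j+2)).erase v) := by
              rw [herase2, Finset.insert_comm]
            refine ⟨insert u (insert r (((σ (2*j)).erase v).erase x)),
              reach_trans (reach_trans hreach move1) move2,
              hS''sub, hS''i, hS''c, Or.inr ⟨hvT2, r, hrF, hrv, ?_, ?_, hfinaleq⟩⟩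
            · rw [herase2]
              intro hh
              rcases Finset.mem_insert.mp hh with hh | hh
              · exact hurne.1 hh.symm
              · exact hrR2x hh
            · rw [herase2]
              intro w hw
              rcases Finset.mem_insert.mp hw with rfl | hw
              · exact fun hh => hurne.2 hh
              · exact hradj w (hR2xsub hw)
      · -- v is not in the current real set; S' = σ (2*j)
        have hS'T0 : S' = σ (2*j) := by
          rcases hmatch with ⟨_, h⟩ | ⟨hvm, _⟩
          · exact h
          · exact absurd hvm hvT0
        have hvT1 : v ∉ σ (2*j+1) := by
          rw [hT1]; intro hh; exact hvT0 (Finset.mem_of_mem_erase hh)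
        have hT1sub : σ (2*j+1) ⊆ W.erase v := by
          intro w hw
          exact Finset.mem_erase.mpr ⟨fun hh => hvT1 (hh ▸ hw), hT1W hw⟩
        have move1 : Reach G k (W.erase v) S' (σ (2*j+1)) := by
          apply reach_single' hS'W hS'i (by omega) (by omega) hT1sub hT1i
            (by omega) (by omega)
          rw [hS'T0, hT1, symmDiff_erase_self hxmem]
          simp
        by_cases huv : u = v
        · -- case 2 : v enters; park the new token on a fresh replacement r
          have hRC : ∀ w ∈ σ (2*j+1), w ∉ C := by
            intro w hw hC
            have hwT2 : w ∈ σ (2*j+2) := by rw [hT2]; exact Finset.mem_insert_of_mem hw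
            have hvT2 : v ∈ σ (2*j+2) := by rw [hT2, huv]; exact Finset.mem_insert_self _ _
            have hwv : w ≠ v := fun hh => humem (huv ▸ hh ▸ hw)
            rcases mem_cnbhd.mp (hCv hC) with hh | ⟨_, hh⟩
            · exact hwv hh
            · exact hT2i v hvT2 w hwT2 hh
          obtain ⟨r, hrF, hrv, hrgood⟩ := hchoose (σ (2*j+1)) hT1W (by omega) hRC
          have hrW : r ∈ W := hFW hrF
          have hrT1 : r ∉ σ (2*j+1) := fun hh => (hrgood r hh) self_mem_cnbhd
          have hradj : ∀ w ∈ σ (2*j+1), ¬ G.Adj r w := by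
            intro w hw
            exact (not_mem_cnbhd_of (hT1W hw) (hrgood w hw)).2
          have hS''i : IsIndep G (insert r (σ (2*j+1))) := indep_insert hT1i hradj
          have hS''sub : insert r (σ (2*j+1)) ⊆ W.erase v :=
            Finset.insert_subset (Finset.mem_erase.mpr ⟨hrv, hrW⟩) hT1sub
          have hS''c : (insert r (σ (2*j+1))).card = k := by
            rw [Finset.card_insert_of_notMem hrT1, hc1]
            omega
          have move2 : Reach G k (W.erase v) (σ (2*j+1)) (insert r (σ (2*j+1))) := by
            apply reach_single' hT1sub hT1i (by omega) (by omega) hS''sub hS''i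
              (by omega) (by omega)
            rw [symmDiff_insert_self hrT1]
            simp
          have herase : (σ (2*j+2)).erase v = σ (2*j+1) := by
            rw [hT2, huv, Finset.erase_insert hvT1]
          refine ⟨insert r (σ (2*j+1)),
            reach_trans (reach_trans hreach move1) move2, hS''sub, hS''i, hS''c,
            Or.inr ⟨by rw [hT2, huv]; exact Finset.mem_insert_self _ _,
              r, hrF, hrv, by rw [herase]; exact hrT1, by rw [herase]; exact hradj,
              by rw [herase]⟩⟩
        · -- case 1 : v not involved at all
          have hvT2 : v ∉ σ (2*j+2) := by
            rw [hT2]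
            intro hh
            rcases Finset.mem_insert.mp hh with hh | hh
            · exact huv hh.symm
            · exact hvT1 hh
          have hT2sub : σ (2*j+2) ⊆ W.erase v := by
            intro w hw
            exact Finset.mem_erase.mpr ⟨fun hh => hvT2 (hh ▸ hw), hT2W hw⟩
          have move2 : Reach G k (W.erase v) (σ (2*j+1)) (σ (2*j+2)) := by
            apply reach_single' hT1sub hT1i (by omega) (by omega) hT2sub hT2i
              (by omega) (by omega)
            rw [hT2, symmDiff_insert_self humem]
            simp
          exact ⟨σ (2*j+2), reach_trans (reach_trans hreach move1) move2,
            hT2sub, hT2i, hc2, Or.inl ⟨hvT2, rfl⟩⟩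

  -- conclude
  have hfin := key (ℓ/2) (by omega)
  have hll : 2 * (ℓ/2) = ℓ := by omega
  rw [hll] at hfin
  obtain ⟨S', hreach, _, _, _, hmatch⟩ := hfin
  rcases hmatch with ⟨_, rfl⟩ | ⟨hvmem, _⟩
  · rwa [hl] at hreach
  · exact absurd (hl ▸ hvmem) hvIt

end Basics

section Counting

variable {V : Type*} [Fintype V] [DecidableEq V] (G : SimpleGraph V)
    [DecidableRel G.Adj] {d : ℕ}

lemma degSum_aux (hdeg : Degenerate G d) :
    ∀ (n : ℕ) (W : Finset V), W.card ≤ n →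
      ∑ x ∈ W, (W.filter (fun u => G.Adj x u)).card ≤ 2 * d * W.card := by
  intro n
  induction n with
  | zero =>
    intro W hW
    have : W = ∅ := Finset.card_eq_zero.mp (by omega)
    simp [this]
  | succ n ih =>
    intro W hW
    rcases Finset.eq_empty_or_nonempty W with rfl | hne
    · simp
    obtain ⟨v, hv, hdv⟩ := hdeg W hne
    have hfilter : ∀ x, (W.filter (fun u => G.Adj x u)).card =
        ((W.erase v).filter (fun u => G.Adj x u)).card + (if G.Adj x v then 1 else 0) := by
      intro x
      conv_lhs => rw [← Finset.insert_erase hv]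
      rw [Finset.filter_insert]
      by_cases h : G.Adj x v
      · rw [if_pos h, Finset.card_insert_of_notMem, if_pos h]
        intro hh
        exact (Finset.mem_erase.mp (Finset.mem_filter.mp hh).1).1 rfl
      · rw [if_neg h, if_neg h, add_zero]
    have hsplit : ∑ x ∈ W, (W.filter (fun u => G.Adj x u)).card =
        (W.filter (fun u => G.Adj v u)).card +
          ∑ x ∈ W.erase v, (W.filter (fun u => G.Adj x u)).card :=
      (Finset.add_sum_erase W _ hv).symm
    have hsum2 : ∑ x ∈ W.erase v, (W.filter (fun u => G.Adj x u)).card =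
        (∑ x ∈ W.erase v, ((W.erase v).filter (fun u => G.Adj x u)).card) +
          ∑ x ∈ W.erase v, (if G.Adj x v then 1 else 0) := by
      rw [← Finset.sum_add_distrib]
      exact Finset.sum_congr rfl (fun x _ => hfilter x)
    have hcross : ∑ x ∈ W.erase v, (if G.Adj x v then 1 else 0) ≤ d := by
      have : ∑ x ∈ W.erase v, (if G.Adj x v then 1 else 0) =
          ((W.erase v).filter (fun x => G.Adj x v)).card := by
        rw [Finset.card_filter]
      rw [this]
      refine le_trans (Finset.card_le_card ?_) hdv
      intro x hx
      rcases Finset.mem_filter.mp hx with ⟨hx1, hx2⟩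
      exact Finset.mem_filter.mpr ⟨Finset.mem_of_mem_erase hx1, hx2.symm⟩
    have hih := ih (W.erase v) (by rw [Finset.card_erase_of_mem hv]; omega)
    have hWc : 1 ≤ W.card := Finset.card_pos.mpr hne
    have hec : (W.erase v).card = W.card - 1 := Finset.card_erase_of_mem hv
    rw [hsplit, hsum2]
    rw [hec] at hih
    have h2d : 2 * d * (W.card - 1) + 2 * d = 2 * d * W.card := by
      have hcc : W.card - 1 + 1 = W.card := by omega
      calc 2 * d * (W.card - 1) + 2 * d = 2 * d * ((W.card - 1) + 1) := by ring
      _ = 2 * d * W.card := by rw [hcc]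
    omega

lemma card_T_ge {d k : ℕ} (hk : 2 ≤ k) :
    4 * d * k + k ≤ Nat.factorial (2*d+1) * (2*k-1)^(2*d+1) := by
  have h1 : 2*d+1 ≤ Nat.factorial (2*d+1) := Nat.self_le_factorial _
  have h2 : 2*d+1 ≤ 2^(2*d) := by
    have := Nat.lt_two_pow_self (n := 2*d)
    -- 2*d < 2^(2*d)
    omega
  have h3 : (2:ℕ)^(2*d) ≤ (2*k-1)^(2*d) := Nat.pow_le_pow_left (by omega) _
  have h4 : (2*k-1)^(2*d+1) = (2*k-1)^(2*d) * (2*k-1) := by ring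
  have h5 : (2*d+1) * (2*k-1) ≤ (2*k-1)^(2*d+1) := by
    rw [h4]
    exact Nat.mul_le_mul (le_trans h2 h3) (le_refl _)
  have h6 : (2*d+1) * ((2*d+1) * (2*k-1)) ≤
      Nat.factorial (2*d+1) * (2*k-1)^(2*d+1) :=
    Nat.mul_le_mul h1 h5
  have ha : 4*d+1 ≤ (2*d+1)*(2*d+1) := by
    have : (2*d+1)*(2*d+1) = 4*(d*d) + 4*d + 1 := by ring
    omega
  have hb : k ≤ 2*k-1 := by omega
  have hc : (4*d+1)*k ≤ ((2*d+1)*(2*d+1))*(2*k-1) := Nat.mul_le_mul ha hb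
  have hd : ((2*d+1)*(2*d+1))*(2*k-1) = (2*d+1)*((2*d+1)*(2*k-1)) := by ring
  have he : (4*d+1)*k = 4*d*k + k := by ring
  omega

lemma theta_le_T {d k : ℕ} (hk : 2 ≤ k) :
    Nat.factorial (2*d+1) * (k+1)^(2*d+1) ≤ Nat.factorial (2*d+1) * (2*k-1)^(2*d+1) :=
  Nat.mul_le_mul_left _ (Nat.pow_le_pow_left (by omega) _)

lemma low_count (hdeg : Degenerate G d) {k : ℕ} (hk : 2 ≤ k) (W A : Finset V)
    (hA : A ⊆ W) (hAcard : A.card ≤ 2*k)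
    (hW : (2*d+1) * (Nat.factorial (2*d+1) * (2*k-1)^(2*d+1)) + 2*k < W.card)
    (hz : ((W \ A).filter (fun x => (W.filter (fun u => G.Adj x u)).card = 0)).card ≤ k - 1) :
    Nat.factorial (2*d+1) * (k+1)^(2*d+1) <
      ((W \ A).filter (fun x => (W.filter (fun u => G.Adj x u)).card ≤ 2*d)).card := by
  set T := Nat.factorial (2*d+1) * (2*k-1)^(2*d+1) with hT
  set Θ := Nat.factorial (2*d+1) * (k+1)^(2*d+1) with hΘ
  set deg := fun x => (W.filter (fun u => G.Adj x u)).card with hdeg'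
  set B := W \ A with hB
  set L := B.filter (fun x => deg x ≤ 2*d) with hL
  set Z := B.filter (fun x => deg x = 0) with hZ
  by_contra hcon
  push_neg at hcon
  have hLB : L ⊆ B := Finset.filter_subset _ _
  have hBW : B ⊆ W := Finset.sdiff_subset
  have hsumW : ∑ x ∈ W, deg x ≤ 2 * d * W.card := degSum_aux G hdeg W.card W le_rfl
  have hsumB : ∑ x ∈ B, deg x ≤ ∑ x ∈ W, deg x := by
    apply Finset.sum_le_sum_of_subset hBW
  have hsplit : ∑ x ∈ B \ L, deg x + ∑ x ∈ L, deg x = ∑ x ∈ B, deg x :=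
    Finset.sum_sdiff hLB
  have hlow1 : (2*d+1) * (B \ L).card ≤ ∑ x ∈ B \ L, deg x := by
    calc (2*d+1) * (B \ L).card = ∑ _x ∈ B \ L, (2*d+1) := by
          rw [Finset.sum_const, smul_eq_mul, mul_comm]
    _ ≤ ∑ x ∈ B \ L, deg x := by
        apply Finset.sum_le_sum
        intro x hx
        rcases Finset.mem_sdiff.mp hx with ⟨hx1, hx2⟩
        have : ¬ (deg x ≤ 2*d) := fun h => hx2 (Finset.mem_filter.mpr ⟨hx1, h⟩)
        omega
  have hlow2 : L.card ≤ ∑ x ∈ L, deg x + Z.card := by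
    have hsplitL : (L.filter (fun x => deg x = 0)).card +
        (L.filter (fun x => ¬ deg x = 0)).card = L.card :=
      Finset.card_filter_add_card_filter_not _
    have hZsub : (L.filter (fun x => deg x = 0)).card ≤ Z.card := by
      apply Finset.card_le_card
      intro x hx
      rcases Finset.mem_filter.mp hx with ⟨hx1, hx2⟩
      exact Finset.mem_filter.mpr ⟨hLB hx1, hx2⟩
    have hpos : (L.filter (fun x => ¬ deg x = 0)).card ≤ ∑ x ∈ L, deg x := by
      calc (L.filter (fun x => ¬ deg x = 0)).card
          = ∑ _x ∈ L.filter (fun x => ¬ deg x = 0), 1 := by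
            rw [Finset.sum_const, smul_eq_mul, mul_one]
      _ ≤ ∑ x ∈ L.filter (fun x => ¬ deg x = 0), deg x := by
          apply Finset.sum_le_sum
          intro x hx
          have := (Finset.mem_filter.mp hx).2
          omega
      _ ≤ ∑ x ∈ L, deg x := by
          apply Finset.sum_le_sum_of_subset (Finset.filter_subset _ _)
    omega
  have hcards1 : (B \ L).card + L.card = B.card := Finset.card_sdiff_add_card_eq_card hLB
  have hcards2 : B.card + A.card = W.card := Finset.card_sdiff_add_card_eq_card hA
  have hTk4 : 4*d*k + k ≤ T := card_T_ge hk
  have hΘT : Θ ≤ T := theta_le_T hk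
  -- combine
  have key : (2*d+1) * (B \ L).card + L.card ≤ 2 * d * W.card + (k-1) := by
    calc (2*d+1) * (B \ L).card + L.card
        ≤ ∑ x ∈ B \ L, deg x + (∑ x ∈ L, deg x + Z.card) := Nat.add_le_add hlow1 hlow2
    _ = (∑ x ∈ B, deg x) + Z.card := by omega
    _ ≤ 2 * d * W.card + (k-1) := by
        have := le_trans hsumB hsumW
        omega
  have g1 : (2*d+1)*B.card = (2*d+1)*(B \ L).card + L.card + 2*d*L.card := by
    rw [← hcards1]; ring
  have g2 : 2*d*L.card ≤ 2*d*T := Nat.mul_le_mul_left _ (le_trans hcon hΘT)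
  have g4 : (2*d+1)*B.card + (2*d+1)*A.card = (2*d+1)*W.card := by
    rw [← hcards2]; ring
  have g5 : (2*d+1)*A.card ≤ (2*d+1)*(2*k) := Nat.mul_le_mul_left _ hAcard
  have g6 : (2*d+1)*W.card = 2*d*W.card + W.card := by ring
  have g7 : (2*d+1)*(2*k) = 4*d*k + 2*k := by ring
  have g8 : 2*d*T + T = (2*d+1)*T := by ring
  have hk' : k - 1 + 1 = k := by omega
  linarith [key, g1, g2, g4, g5, g6, g7, g8, hk', hTk4, hW]

end Counting

section Main

variable {V : Type*} [Fintype V] [DecidableEq V] {G : SimpleGraph V}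
    [DecidableRel G.Adj] {d k : ℕ}

/-- Moving tokens one by one onto a completely `G`-isolated (within `W`) target set. -/
lemma reach_free (hk : 1 ≤ k) {W Q : Finset V} (hfree : ∀ q ∈ Q, ∀ w ∈ W, ¬ G.Adj q w)
    (hQW : Q ⊆ W) (hQc : Q.card = k) :
    ∀ (n : ℕ) (P' : Finset V), (P' \ Q).card ≤ n → P' ⊆ W → IsIndep G P' → P'.card = k →
      Reach G k W P' Q := by
  have hQi : IsIndep G Q := fun a ha b hb => hfree a ha b (hQW hb)
  intro n
  induction n with
  | zero =>
    intro P' hd hPW hPi hPc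
    have hPQ : P' = Q := by
      have hsub : P' ⊆ Q := by
        intro w hw
        by_contra hh
        have : w ∈ P' \ Q := Finset.mem_sdiff.mpr ⟨hw, hh⟩
        have := Finset.card_pos.mpr ⟨w, this⟩
        omega
      exact Finset.eq_of_subset_of_card_le hsub (by omega)
    rw [hPQ]
    exact reach_refl hQW hQi (by omega) (by omega)
  | succ n ihn =>
    intro P' hd hPW hPi hPc
    rcases Finset.eq_empty_or_nonempty (P' \ Q) with he | hne
    · have hPQ : P' = Q := by
        have hsub : P' ⊆ Q := by
          intro w hw
          by_contra hh
          have : w ∈ P' \ Q := Finset.mem_sdiff.mpr ⟨hw, hh⟩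
          simp [he] at this
        exact Finset.eq_of_subset_of_card_le hsub (by omega)
      rw [hPQ]
      exact reach_refl hQW hQi (by omega) (by omega)
    · obtain ⟨p, hp⟩ := hne
      rcases Finset.mem_sdiff.mp hp with ⟨hpP, hpQ⟩
      have hQP : (Q \ P').Nonempty := by
        by_contra hh
        rw [Finset.not_nonempty_iff_eq_empty] at hh
        have hsub : Q ⊆ P' := by
          intro q hq
          by_contra hh2
          have : q ∈ Q \ P' := Finset.mem_sdiff.mpr ⟨hq, hh2⟩
          simp [hh] at this
        have heq := Finset.eq_of_subset_of_card_le hsub (by omega)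
        exact hpQ (by rw [heq]; exact hpP)
      obtain ⟨q, hq⟩ := hQP
      rcases Finset.mem_sdiff.mp hq with ⟨hqQ, hqP⟩
      have hq1 : q ∉ P'.erase p := fun hh => hqP (Finset.mem_of_mem_erase hh)
      have hP1i : IsIndep G (P'.erase p) := indep_mono hPi (Finset.erase_subset _ _)
      have hP1W : P'.erase p ⊆ W := (Finset.erase_subset _ _).trans hPW
      have hP2i : IsIndep G (insert q (P'.erase p)) :=
        indep_insert hP1i (fun w hw => hfree q hqQ w (hP1W hw))
      have hP2W : insert q (P'.erase p) ⊆ W := Finset.insert_subset (hQW hqQ) hP1W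
      have hP1c : (P'.erase p).card = k - 1 := by
        rw [Finset.card_erase_of_mem hpP, hPc]
      have hP2c : (insert q (P'.erase p)).card = k := by
        rw [Finset.card_insert_of_notMem hq1, hP1c]; omega
      have move1 : Reach G k W P' (P'.erase p) := by
        apply reach_single hPW hPi (by omega) (by omega) hP1W hP1i (by omega) (by omega)
        rw [symmDiff_erase_self hpP]; simp
      have move2 : Reach G k W (P'.erase p) (insert q (P'.erase p)) := by
        apply reach_single hP1W hP1i (by omega) (by omega) hP2W hP2i (by omega) (by omega)
        rw [symmDiff_insert_self hq1]; simp
      have hdec : (insert q (P'.erase p) \ Q).card ≤ n := by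
        have hsub : insert q (P'.erase p) \ Q ⊆ (P' \ Q).erase p := by
          intro w hw
          rcases Finset.mem_sdiff.mp hw with ⟨hw1, hw2⟩
          rcases Finset.mem_insert.mp hw1 with rfl | hw1
          · exact absurd hqQ hw2
          · exact Finset.mem_erase.mpr ⟨(Finset.mem_erase.mp hw1).1,
              Finset.mem_sdiff.mpr ⟨Finset.mem_of_mem_erase hw1, hw2⟩⟩
        have h1 := Finset.card_le_card hsub
        have h2 : ((P' \ Q).erase p).card = (P' \ Q).card - 1 :=
          Finset.card_erase_of_mem hp
        omega
      exact reach_trans (reach_trans move1 move2)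
        (ihn (insert q (P'.erase p)) hdec hP2W hP2i hP2c)

/-- The selection property coming from a sunflower. -/
lemma flower_choose {W F C : Finset V} {v : V} (hFW : F ⊆ W) (hFcard : F.card = k + 2)
    (hF : ∀ x ∈ F, ∀ y ∈ F, x ≠ y → cnbhd G W x ∩ cnbhd G W y = C) :
    ∀ R : Finset V, R ⊆ W → R.card ≤ k → (∀ w ∈ R, w ∉ C) →
      ∃ r ∈ F, r ≠ v ∧ ∀ w ∈ R, w ∉ cnbhd G W r := by
  intro R hRW hRc hRC
  classical
  set bad := F.filter (fun y => ∃ w ∈ R, w ∈ cnbhd G W y) with hbad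
  have hbadcard : bad.card ≤ R.card := by
    have hsub : bad ⊆ R.biUnion (fun w => F.filter (fun y => w ∈ cnbhd G W y)) := by
      intro y hy
      rcases Finset.mem_filter.mp hy with ⟨hyF, w, hwR, hwc⟩
      exact Finset.mem_biUnion.mpr ⟨w, hwR, Finset.mem_filter.mpr ⟨hyF, hwc⟩⟩
    calc bad.card ≤ (R.biUnion (fun w => F.filter (fun y => w ∈ cnbhd G W y))).card :=
          Finset.card_le_card hsub
    _ ≤ ∑ w ∈ R, (F.filter (fun y => w ∈ cnbhd G W y)).card := Finset.card_biUnion_le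
    _ ≤ ∑ _w ∈ R, 1 := by
        apply Finset.sum_le_sum
        intro w hw
        apply Finset.card_le_one.mpr
        intro y1 hy1 y2 hy2
        rcases Finset.mem_filter.mp hy1 with ⟨hy1F, hy1c⟩
        rcases Finset.mem_filter.mp hy2 with ⟨hy2F, hy2c⟩
        by_contra hne
        have : w ∈ cnbhd G W y1 ∩ cnbhd G W y2 := Finset.mem_inter.mpr ⟨hy1c, hy2c⟩
        rw [hF y1 hy1F y2 hy2F hne] at this
        exact hRC w hw this
    _ = R.card := by simp
  have hbig : 1 ≤ (F \ insert v bad).card := by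
    have h1 : (insert v bad).card ≤ k + 1 := by
      have := Finset.card_insert_le v bad
      omega
    have h2 : F.card ≤ (F \ insert v bad).card + (insert v bad).card :=
      Finset.card_le_card_sdiff_add_card
    omega
  obtain ⟨r, hr⟩ := Finset.card_pos.mp
    (show 0 < (F \ insert v bad).card by omega)
  rcases Finset.mem_sdiff.mp hr with ⟨hrF, hrbad⟩
  refine ⟨r, hrF, fun hh => hrbad (hh ▸ Finset.mem_insert_self _ _), ?_⟩
  intro w hw hwc
  exact hrbad (Finset.mem_insert_of_mem (Finset.mem_filter.mpr ⟨hrF, w, hw, hwc⟩))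

end Main

section Kernel

variable {V : Type*} [Fintype V] [DecidableEq V] {G : SimpleGraph V}
    [DecidableRel G.Adj] {d k : ℕ}

lemma kernel_main (hdeg : Degenerate G d) (hk : 0 < k)
    {Is It : Finset V} (hIs : IsIndep G Is) (hIt : IsIndep G It)
    (hIsc : Is.card = k) (hItc : It.card = k) :
    ∀ (n : ℕ) (W : Finset V), Is ∪ It ⊆ W → W.card ≤ n →
      ∃ W', Is ∪ It ⊆ W' ∧ W' ⊆ W ∧
        W'.card ≤ (2*d+1) * (Nat.factorial (2*d+1) * (2*k-1)^(2*d+1)) + 2*k ∧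
        (Reach G k W Is It ↔ Reach G k W' Is It) := by
  intro n
  induction n with
  | zero =>
    intro W hAW hWc
    exact ⟨W, hAW, Finset.Subset.refl W, le_trans hWc (Nat.zero_le _), Iff.rfl⟩
  | succ n ih =>
    intro W hAW hWc
    by_cases hsmall : W.card ≤ (2*d+1) * (Nat.factorial (2*d+1) * (2*k-1)^(2*d+1)) + 2*k
    · exact ⟨W, hAW, Finset.Subset.refl W, hsmall, Iff.rfl⟩
    push_neg at hsmall
    have hIsW : Is ⊆ W := (Finset.union_subset_iff.mp hAW).1
    have hItW : It ⊆ W := (Finset.union_subset_iff.mp hAW).2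
    have hAcard : (Is ∪ It).card ≤ 2*k := by
      have := Finset.card_union_le Is It
      omega
    by_cases hk1 : k = 1
    · -- k = 1 : always reconfigurable through the empty set
      subst hk1
      have hIsW' : Is ⊆ Is ∪ It := Finset.subset_union_left
      have hItW' : It ⊆ Is ∪ It := Finset.subset_union_right
      have hei : IsIndep G (∅ : Finset V) := fun u hu => absurd hu (Finset.notMem_empty u)
      have hd1 : (symmDiff Is (∅ : Finset V)).card = 1 := by
        have : symmDiff Is (∅ : Finset V) = Is := by
          ext w; simp [Finset.mem_symmDiff]
        rw [this, hIsc]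
      have hd2 : (symmDiff (∅ : Finset V) It).card = 1 := by
        have : symmDiff (∅ : Finset V) It = It := by
          ext w; simp [Finset.mem_symmDiff]
        rw [this, hItc]
      have m1 : Reach G 1 (Is ∪ It) Is ∅ :=
        reach_single hIsW' hIs (by omega) (by omega)
          (Finset.empty_subset _) hei (by simp) (by simp) hd1
      have m2 : Reach G 1 (Is ∪ It) ∅ It :=
        reach_single (Finset.empty_subset _) hei (by simp) (by simp)
          hItW' hIt (by omega) (by omega) hd2
      have hreach' : Reach G 1 (Is ∪ It) Is It := reach_trans m1 m2
      have hreachW : Reach G 1 W Is It := reach_mono hAW hreach'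
      refine ⟨Is ∪ It, Finset.Subset.refl _, hAW, ?_, iff_of_true hreachW hreach'⟩
      exact le_trans hAcard (Nat.le_add_left _ _)
    · have hk2 : 2 ≤ k := by omega
      have hW1 : 1 ≤ W.card := by
        have : Is.Nonempty := Finset.card_pos.mp (by omega)
        obtain ⟨a, ha⟩ := this
        exact Finset.card_pos.mpr ⟨a, hIsW ha⟩
      by_cases htwin : ∃ x ∈ W \ (Is ∪ It), ∃ y ∈ W, y ≠ x ∧ cnbhd G W x = cnbhd G W y
      · -- twin reduction
        obtain ⟨x, hxWA, y, hyW, hyx, htw⟩ := htwin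
        rcases Finset.mem_sdiff.mp hxWA with ⟨hxW, hxA⟩
        have hxIs : x ∉ Is := fun hh => hxA (Finset.mem_union_left _ hh)
        have hxIt : x ∉ It := fun hh => hxA (Finset.mem_union_right _ hh)
        have hforward : Reach G k W Is It → Reach G k (W.erase x) Is It := by
          intro hr
          refine reach_erase_of_flower (by omega) (C := cnbhd G W x) (F := {x, y})
            ?_ (Finset.mem_insert_self _ _) (Finset.Subset.refl _) ?_ hxIs hxIt hIsc hItc hr
          · exact Finset.insert_subset hxW (Finset.singleton_subset_iff.mpr hyW)
          · intro R hRW hRc hRC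
            refine ⟨y, by simp, hyx, ?_⟩
            intro w hw hc
            exact hRC w hw (by rw [htw]; exact hc)
        have hAW' : Is ∪ It ⊆ W.erase x := by
          intro w hw
          exact Finset.mem_erase.mpr ⟨fun hh => hxA (hh ▸ hw), hAW hw⟩
        have hcard' : (W.erase x).card ≤ n := by
          rw [Finset.card_erase_of_mem hxW]; omega
        obtain ⟨W', h1, h2, h3, h4⟩ := ih (W.erase x) hAW' hcard'
        exact ⟨W', h1, h2.trans (Finset.erase_subset _ _), h3,
          Iff.trans ⟨hforward, reach_mono (Finset.erase_subset x W)⟩ h4⟩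
      · push_neg at htwin
        by_cases hiso : k ≤ ((W \ (Is ∪ It)).filter
            (fun x => (W.filter (fun u => G.Adj x u)).card = 0)).card
        · -- at least k isolated vertices : always reconfigurable
          obtain ⟨Z, hZsub, hZc⟩ := Finset.exists_subset_card_eq hiso
          have hZW : Z ⊆ W := by
            intro z hz
            exact (Finset.mem_sdiff.mp (Finset.mem_filter.mp (hZsub hz)).1).1
          have hZfree : ∀ z ∈ Z, ∀ w ∈ W, ¬ G.Adj z w := by
            intro z hz w hw hadj
            have hzero := (Finset.mem_filter.mp (hZsub hz)).2
            rw [Finset.card_eq_zero] at hzero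
            have : w ∈ W.filter (fun u => G.Adj z u) := Finset.mem_filter.mpr ⟨hw, hadj⟩
            rw [hzero] at this
            exact absurd this (Finset.notMem_empty w)
          have hW'W : (Is ∪ It) ∪ Z ⊆ W := Finset.union_subset hAW hZW
          have hfree' : ∀ z ∈ Z, ∀ w ∈ (Is ∪ It) ∪ Z, ¬ G.Adj z w :=
            fun z hz w hw => hZfree z hz w (hW'W hw)
          have hZW' : Z ⊆ (Is ∪ It) ∪ Z := Finset.subset_union_right
          have r1 : Reach G k ((Is ∪ It) ∪ Z) Is Z :=
            reach_free (by omega) hfree' hZW' hZc (Is \ Z).card Is le_rfl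
              (Finset.subset_union_left.trans Finset.subset_union_left) hIs hIsc
          have r2 : Reach G k ((Is ∪ It) ∪ Z) It Z :=
            reach_free (by omega) hfree' hZW' hZc (It \ Z).card It le_rfl
              (Finset.subset_union_right.trans Finset.subset_union_left) hIt hItc
          have hr' : Reach G k ((Is ∪ It) ∪ Z) Is It := reach_trans r1 (reach_symm r2)
          have hrW : Reach G k W Is It := reach_mono hW'W hr'
          refine ⟨(Is ∪ It) ∪ Z, Finset.subset_union_left, hW'W, ?_,
            iff_of_true hrW hr'⟩
          have hTk : k ≤ (2*d+1) * (Nat.factorial (2*d+1) * (2*k-1)^(2*d+1)) := by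
            calc k ≤ 2*k-1 := by omega
            _ ≤ (2*k-1)^(2*d+1) := Nat.le_self_pow (by omega) _
            _ ≤ Nat.factorial (2*d+1) * (2*k-1)^(2*d+1) :=
                Nat.le_mul_of_pos_left _ (Nat.factorial_pos _)
            _ ≤ (2*d+1) * (Nat.factorial (2*d+1) * (2*k-1)^(2*d+1)) :=
                Nat.le_mul_of_pos_left _ (by omega)
          have hfin : ((Is ∪ It) ∪ Z).card ≤ k + 2*k := by
            have := Finset.card_union_le (Is ∪ It) Z
            omega
          exact le_trans hfin (by
            have := Nat.add_le_add_right hTk (2*k)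
            omega)
        · -- the sunflower case
          push_neg at hiso
          have hzk : ((W \ (Is ∪ It)).filter
              (fun x => (W.filter (fun u => G.Adj x u)).card = 0)).card ≤ k - 1 := by
            omega
          have hlow := low_count G hdeg hk2 W (Is ∪ It) hAW hAcard hsmall hzk
          obtain ⟨F, hFL, hFc, C, hC⟩ := sunflower_indexed (2*d+1) (k+1) (by omega)
            ((W \ (Is ∪ It)).filter (fun x => (W.filter (fun u => G.Adj x u)).card ≤ 2*d))
            (cnbhd G W)
            (by
              intro x hx
              have h1 := (Finset.mem_filter.mp hx).2
              have h2 := Finset.card_insert_le x (W.filter (fun u => G.Adj x u))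
              unfold cnbhd
              omega)
            (by
              intro x hx y hy hEq
              by_contra hne
              exact htwin x (Finset.mem_filter.mp hx).1 y
                (Finset.mem_sdiff.mp (Finset.mem_filter.mp hy).1).1
                (fun hh => hne hh.symm) hEq)
            hlow
          have hFcc : F.card = k + 2 := by omega
          obtain ⟨v, hvF⟩ := Finset.card_pos.mp (show 0 < F.card by omega)
          have hvL := hFL hvF
          rcases Finset.mem_sdiff.mp (Finset.mem_filter.mp hvL).1 with ⟨hvW, hvA⟩
          have hvIs : v ∉ Is := fun hh => hvA (Finset.mem_union_left _ hh)
          have hvIt : v ∉ It := fun hh => hvA (Finset.mem_union_right _ hh)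
          have hFW : F ⊆ W := by
            intro z hz
            exact (Finset.mem_sdiff.mp (Finset.mem_filter.mp (hFL hz)).1).1
          have hCv : C ⊆ cnbhd G W v := by
            obtain ⟨y, hyF, hyne⟩ : ∃ y ∈ F, y ≠ v := by
              obtain ⟨a, ha, b, hb, hab⟩ := Finset.one_lt_card.mp
                (show 1 < F.card by omega)
              by_cases hav : a = v
              · exact ⟨b, hb, fun hh => hab (by rw [hav, hh])⟩
              · exact ⟨a, ha, hav⟩
            rw [← hC v hvF y hyF (fun hh => hyne hh.symm)]
            exact Finset.inter_subset_left
          have hforward : Reach G k W Is It → Reach G k (W.erase v) Is It :=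
            fun hr => reach_erase_of_flower (by omega) hFW hvF hCv
              (flower_choose (v := v) hFW hFcc hC) hvIs hvIt hIsc hItc hr
          have hAW' : Is ∪ It ⊆ W.erase v := by
            intro w hw
            exact Finset.mem_erase.mpr ⟨fun hh => hvA (hh ▸ hw), hAW hw⟩
          have hcard' : (W.erase v).card ≤ n := by
            rw [Finset.card_erase_of_mem hvW]; omega
          obtain ⟨W', h1, h2, h3, h4⟩ := ih (W.erase v) hAW' hcard'
          exact ⟨W', h1, h2.trans (Finset.erase_subset _ _), h3,
            Iff.trans ⟨hforward, reach_mono (Finset.erase_subset v W)⟩ h4⟩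

end Kernel

/-- ISR on `d`-degenerate graphs has a kernel: there is a set `W` of at most
`(2d+1) * (2d+1)! * (2k-1)^(2d+1) + 2k` vertices, containing `I_s ∪ I_t`, such
that there is a reconfiguration sequence from `I_s` to `I_t` in `G` iff
there is one in the induced subgraph `G[W]`. -/
theorem isr_degenerate_kernel {V : Type*} [Fintype V] [DecidableEq V]
    (G : SimpleGraph V) [DecidableRel G.Adj] (d k : ℕ) (hk : 0 < k)
    (hdeg : Degenerate G d)
    (Is It : Finset V) (hIs : IsIndep G Is) (hIt : IsIndep G It)
    (hIsCard : Is.card = k) (hItCard : It.card = k) :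
    ∃ W : Finset V, Is ∪ It ⊆ W ∧
      W.card ≤ (2 * d + 1) * Nat.factorial (2 * d + 1) * (2 * k - 1) ^ (2 * d + 1)
        + 2 * k ∧
      ((∃ ℓ σ, IsISRecSeqOn G Finset.univ k Is It ℓ σ) ↔
       (∃ ℓ σ, IsISRecSeqOn G W k Is It ℓ σ)) := by
  obtain ⟨W', h1, _, h3, h4⟩ := kernel_main hdeg hk hIs hIt hIsCard hItCard
    (Finset.univ.card) Finset.univ (Finset.subset_univ _) le_rfl
  refine ⟨W', h1, ?_, h4⟩
  have hassoc : (2*d+1) * Nat.factorial (2*d+1) * (2*k-1)^(2*d+1) =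
      (2*d+1) * (Nat.factorial (2*d+1) * (2*k-1)^(2*d+1)) := by ring
  omega
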